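/- arXiv:2009.01010 — 2 statements merged into one kernel-verified Lean document; each statement's English description precedes it below -/
import Mathlib

section
/- Let r ≥ 1, let Δ ⊂ ℝ^r be a compact convex set with nonempty interior, and let G : ℝ^r → ℝ be continuous. Assume that for every ξ ∈ ℝ^r with ξ ≠ 0 one has min_{y ∈ Δ} ⟨y, ξ⟩ < 0. Then the function f(ξ) = log ( ∫_Δ exp(−G(y) − ⟨y, ξ⟩) dy ) satisfies f(ξ) → +∞ as |ξ| → +∞, and f attains its infimum over ℝ^r at a unique point. -/
open MeasureTheory
open scoped RealInnerProductSpace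

open Metric Bornology

lemma hyperplane_null {n : ℕ} (w : EuclideanSpace ℝ (Fin n)) (hw : w ≠ 0) (c : ℝ) :
    volume {y : EuclideanSpace ℝ (Fin n) | ⟪y, w⟫ = c} = 0 := by
  set S := {y : EuclideanSpace ℝ (Fin n) | ⟪y, w⟫ = c} with hS
  rcases Set.eq_empty_or_nonempty S with h | ⟨y₀, hy₀⟩
  · simp [h]
  · have hker : LinearMap.ker (innerSL ℝ w : EuclideanSpace ℝ (Fin n) →ₗ[ℝ] ℝ) ≠ ⊤ := by
      intro h
      have hmem : w ∈ LinearMap.ker (innerSL ℝ w : EuclideanSpace ℝ (Fin n) →ₗ[ℝ] ℝ) := h ▸ Submodule.mem_top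
      have : ⟪w, w⟫ = (0:ℝ) := hmem
      exact hw (inner_self_eq_zero.mp this)
    set A := AffineSubspace.mk' y₀ (LinearMap.ker (innerSL ℝ w : EuclideanSpace ℝ (Fin n) →ₗ[ℝ] ℝ)) with hA
    have hSA : S = (A : Set (EuclideanSpace ℝ (Fin n))) := by
      ext y
      have hy₀' : ⟪y₀, w⟫ = c := hy₀
      simp only [hA, SetLike.mem_coe, AffineSubspace.mem_mk', vsub_eq_sub,
        LinearMap.mem_ker, ContinuousLinearMap.coe_coe, hS, Set.mem_setOf_eq]
      rw [show ((innerSL ℝ w) (y - y₀) : ℝ) = ⟪w, y - y₀⟫ from rfl, inner_sub_right,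
        sub_eq_zero, real_inner_comm y w, ← hy₀', real_inner_comm y₀ w]
    have hAne : A ≠ ⊤ := by
      intro h
      apply hker
      have := congrArg AffineSubspace.direction h
      rwa [AffineSubspace.direction_mk', AffineSubspace.direction_top] at this
    rw [hSA]
    exact Measure.addHaar_affineSubspace volume A hAne

lemma integral_exp_pos' {n : ℕ} {Δ : Set (EuclideanSpace ℝ (Fin n))}
    (hΔcpt : IsCompact Δ) (hΔvol : 0 < volume Δ)
    {F : EuclideanSpace ℝ (Fin n) → ℝ} (hF : Continuous F) :
    0 < ∫ y in Δ, Real.exp (F y) := by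
  have hint : IntegrableOn (fun y => Real.exp (F y)) Δ :=
    (hF.rexp).continuousOn.integrableOn_compact hΔcpt
  rw [setIntegral_pos_iff_support_of_nonneg_ae
    (Filter.Eventually.of_forall fun y => (Real.exp_pos _).le) hint]
  have hsupp : Function.support (fun y => Real.exp (F y)) = Set.univ :=
    Set.eq_univ_iff_forall.mpr fun y => Real.exp_ne_zero _
  rwa [hsupp, Set.univ_inter]

lemma strict_midpoint {n : ℕ} {Δ : Set (EuclideanSpace ℝ (Fin n))}
    (hΔcpt : IsCompact Δ) (hΔvol : 0 < volume Δ)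
    {G : EuclideanSpace ℝ (Fin n) → ℝ} (hG : Continuous G)
    {ξ η : EuclideanSpace ℝ (Fin n)} (hne : ξ ≠ η) :
    (∫ y in Δ, Real.exp (-G y - ⟪y, (2⁻¹:ℝ) • (ξ + η)⟫))^2
      < (∫ y in Δ, Real.exp (-G y - ⟪y, ξ⟫)) * (∫ y in Δ, Real.exp (-G y - ⟪y, η⟫)) := by
  have hΔmeas : MeasurableSet Δ := hΔcpt.measurableSet
  set u : EuclideanSpace ℝ (Fin n) → ℝ := fun y => Real.exp ((-G y - ⟪y, ξ⟫)/2) with hu_def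
  set v : EuclideanSpace ℝ (Fin n) → ℝ := fun y => Real.exp ((-G y - ⟪y, η⟫)/2) with hv_def
  have hinnerξ : Continuous fun y : EuclideanSpace ℝ (Fin n) => ⟪y, ξ⟫ :=
    continuous_id.inner continuous_const
  have hinnerη : Continuous fun y : EuclideanSpace ℝ (Fin n) => ⟪y, η⟫ :=
    continuous_id.inner continuous_const
  have hu : Continuous u := (((hG.neg.sub hinnerξ).div_const 2)).rexp
  have hv : Continuous v := (((hG.neg.sub hinnerη).div_const 2)).rexp
  -- pointwise identities
  have huu : ∀ y, u y * u y = Real.exp (-G y - ⟪y, ξ⟫) := by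
    intro y; rw [hu_def, ← Real.exp_add]; ring_nf
  have hvv : ∀ y, v y * v y = Real.exp (-G y - ⟪y, η⟫) := by
    intro y; rw [hv_def, ← Real.exp_add]; ring_nf
  have huv : ∀ y, u y * v y = Real.exp (-G y - ⟪y, (2⁻¹:ℝ) • (ξ + η)⟫) := by
    intro y
    rw [hu_def, hv_def, ← Real.exp_add, real_inner_smul_right, inner_add_right]
    ring_nf
  set A := ∫ y in Δ, u y * u y with hA
  set B := ∫ y in Δ, u y * v y with hB
  set C := ∫ y in Δ, v y * v y with hC
  have hAint : IntegrableOn (fun y => u y * u y) Δ :=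
    ((hu.mul hu)).continuousOn.integrableOn_compact hΔcpt
  have hBint : IntegrableOn (fun y => u y * v y) Δ :=
    ((hu.mul hv)).continuousOn.integrableOn_compact hΔcpt
  have hCint : IntegrableOn (fun y => v y * v y) Δ :=
    ((hv.mul hv)).continuousOn.integrableOn_compact hΔcpt
  have hApos : 0 < A := by
    rw [hA, show (fun y => u y * u y) = fun y => Real.exp (-G y - ⟪y, ξ⟫) from funext huu]
    exact integral_exp_pos' hΔcpt hΔvol (hG.neg.sub hinnerξ)
  have hBpos : 0 < B := by
    rw [hB]
    rw [show (fun y => u y * v y)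
      = fun y => Real.exp (-G y - ⟪y, (2⁻¹:ℝ) • (ξ + η)⟫) from funext huv]
    exact integral_exp_pos' hΔcpt hΔvol
      (hG.neg.sub (continuous_id.inner continuous_const))
  have hCpos : 0 < C := by
    rw [hC, show (fun y => v y * v y) = fun y => Real.exp (-G y - ⟪y, η⟫) from funext hvv]
    exact integral_exp_pos' hΔcpt hΔvol (hG.neg.sub hinnerη)
  set t : ℝ := B / C with ht_def
  have htpos : 0 < t := div_pos hBpos hCpos
  set Q := ∫ y in Δ, (u y - t * v y) * (u y - t * v y) with hQ_def
  have hQval : Q = A - 2*t*B + t^2*C := by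
    rw [hQ_def]
    have : (fun y => (u y - t * v y) * (u y - t * v y))
        = fun y => (u y * u y) - (2*t) * (u y * v y) + t^2 * (v y * v y) := by
      funext y; ring
    rw [this]
    have hI3 : IntegrableOn (fun y => 2*t*(u y * v y)) Δ := hBint.const_mul _
    have hI1 : IntegrableOn (fun y => u y * u y - 2*t*(u y * v y)) Δ := hAint.sub hI3
    have hI2 : IntegrableOn (fun y => t^2*(v y * v y)) Δ := hCint.const_mul _
    rw [integral_add hI1 hI2, integral_sub hAint hI3, integral_const_mul, integral_const_mul]
  have hQnonneg : 0 ≤ Q :=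
    setIntegral_nonneg hΔmeas fun y _ => mul_self_nonneg _
  have hQne : Q ≠ 0 := by
    intro hQ0
    -- a.e. vanishing
    have hint : IntegrableOn (fun y => (u y - t * v y) * (u y - t * v y)) Δ :=
      ((hu.sub (continuous_const.mul hv)).mul (hu.sub (continuous_const.mul hv))).continuousOn.integrableOn_compact hΔcpt
    have hzero : (fun y => (u y - t * v y) * (u y - t * v y)) =ᵐ[volume.restrict Δ] 0 :=
      (integral_eq_zero_iff_of_nonneg_ae
        (Filter.Eventually.of_forall fun y => mul_self_nonneg _) hint).mp hQ0
    have hae : ∀ᵐ y : EuclideanSpace ℝ (Fin n), y ∈ Δ → u y = t * v y := by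
      have := (ae_restrict_iff' hΔmeas).mp hzero
      filter_upwards [this] with y hy hyΔ
      have := hy hyΔ
      have h2 : (u y - t * v y) * (u y - t * v y) = 0 := this
      have := mul_self_eq_zero.mp h2
      linarith
    -- derive linear relation a.e.
    set w := η - ξ with hw_def
    have hwne : w ≠ 0 := sub_ne_zero.mpr (Ne.symm hne)
    have hlin : ∀ᵐ y : EuclideanSpace ℝ (Fin n), y ∈ Δ → ⟪y, w⟫ = 2 * Real.log t := by
      filter_upwards [hae] with y hy hyΔ
      have h1 : u y = t * v y := hy hyΔ
      have hvpos : 0 < v y := Real.exp_pos _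
      have : u y / v y = t := by field_simp at h1 ⊢; linarith [h1]
      rw [hu_def, hv_def, ← Real.exp_sub] at this
      have hlog : (-G y - ⟪y, ξ⟫)/2 - (-G y - ⟪y, η⟫)/2 = Real.log t := by
        rw [← this, Real.log_exp]
      rw [hw_def, inner_sub_right]
      linarith
    -- contradiction with positive volume
    have hsub : Δ ⊆ {y : EuclideanSpace ℝ (Fin n) | ⟪y, w⟫ = 2 * Real.log t}
        ∪ {y | ¬ (y ∈ Δ → ⟪y, w⟫ = 2 * Real.log t)} := by
      intro y hy
      by_cases h : ⟪y, w⟫ = 2 * Real.log t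
      · exact Or.inl h
      · exact Or.inr fun hcon => h (hcon hy)
    have : volume Δ = 0 := by
      refine le_antisymm ?_ zero_le
      calc volume Δ ≤ volume ({y : EuclideanSpace ℝ (Fin n) | ⟪y, w⟫ = 2 * Real.log t}
          ∪ {y | ¬ (y ∈ Δ → ⟪y, w⟫ = 2 * Real.log t)}) := measure_mono hsub
        _ = 0 := measure_union_null (hyperplane_null w hwne _) hlin
    exact absurd this hΔvol.ne'
  have hQpos : 0 < Q := lt_of_le_of_ne hQnonneg (Ne.symm hQne)
  have key : B^2 < A * C := by
    have h1 : Q = A - B^2/C := by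
      rw [hQval, ht_def]; field_simp; ring
    have h2 : A - B^2/C > 0 := h1 ▸ hQpos
    have := (div_lt_iff₀ hCpos).mp (by linarith : B^2/C < A)
    linarith
  calc (∫ y in Δ, Real.exp (-G y - ⟪y, (2⁻¹:ℝ) • (ξ + η)⟫))^2
      = B^2 := by rw [hB]; congr 1; exact (setIntegral_congr_fun hΔmeas fun y _ => (huv y).symm)
    _ < A * C := key
    _ = _ := by
        rw [hA, hC]
        congr 1
        · exact setIntegral_congr_fun hΔmeas fun y _ => huu y
        · exact setIntegral_congr_fun hΔmeas fun y _ => hvv y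

-- uniform negativity on the sphere
lemma sphere_unif {n : ℕ} (hn : 1 ≤ n) {Δ : Set (EuclideanSpace ℝ (Fin n))}
    (hΔcpt : IsCompact Δ) (hΔne : Δ.Nonempty)
    (hneg : ∀ ξ : EuclideanSpace ℝ (Fin n), ξ ≠ 0 → ∃ y ∈ Δ, ⟪y, ξ⟫ < 0) :
    ∃ c > 0, ∀ ξ : EuclideanSpace ℝ (Fin n), ‖ξ‖ = 1 → ∃ y ∈ Δ, ⟪y, ξ⟫ ≤ -c := by
  obtain ⟨R, hR⟩ := hΔcpt.isBounded.subset_closedBall 0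
  set φ : EuclideanSpace ℝ (Fin n) → ℝ :=
    fun ξ => sInf ((fun y => ⟪y, ξ⟫) '' Δ) with hφ_def
  have himg : ∀ ξ : EuclideanSpace ℝ (Fin n), IsCompact ((fun y => ⟪y, ξ⟫) '' Δ) :=
    fun ξ => hΔcpt.image (continuous_id.inner continuous_const)
  have himgne : ∀ ξ : EuclideanSpace ℝ (Fin n), ((fun y => ⟪y, ξ⟫) '' Δ).Nonempty :=
    fun ξ => hΔne.image _
  have hattain : ∀ ξ : EuclideanSpace ℝ (Fin n), ∃ y ∈ Δ, ⟪y, ξ⟫ = φ ξ := by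
    intro ξ
    have := (himg ξ).sInf_mem (himgne ξ)
    obtain ⟨y, hy, hy2⟩ := this
    exact ⟨y, hy, hy2⟩
  have hle : ∀ (ξ : EuclideanSpace ℝ (Fin n)) (y) (_ : y ∈ Δ), φ ξ ≤ ⟪y, ξ⟫ := by
    intro ξ y hy
    exact csInf_le (himg ξ).bddBelow (Set.mem_image_of_mem _ hy)
  have hRnn : 0 ≤ R := by
    obtain ⟨y, hy⟩ := hΔne
    have := hR hy
    simp only [mem_closedBall, dist_zero_right] at this
    exact le_trans (norm_nonneg _) this
  have hlip : ∀ ξ η : EuclideanSpace ℝ (Fin n), φ ξ ≤ φ η + R * ‖ξ - η‖ := by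
    intro ξ η
    obtain ⟨y, hyΔ, hy⟩ := hattain η
    have h1 : φ ξ ≤ ⟪y, ξ⟫ := hle ξ y hyΔ
    have h2 : ⟪y, ξ⟫ = ⟪y, η⟫ + ⟪y, ξ - η⟫ := by rw [inner_sub_right]; ring
    have h3 : ⟪y, ξ - η⟫ ≤ ‖y‖ * ‖ξ - η‖ := real_inner_le_norm _ _
    have h4 : ‖y‖ ≤ R := by
      have := hR hyΔ; simpa [mem_closedBall, dist_zero_right] using this
    have h5 : ‖y‖ * ‖ξ - η‖ ≤ R * ‖ξ - η‖ :=
      mul_le_mul_of_nonneg_right h4 (norm_nonneg _)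
    linarith [h1, hy]
  have hφcont : Continuous φ := by
    refine (LipschitzWith.of_dist_le_mul (K := Real.toNNReal R) ?_).continuous
    intro ξ η
    rw [Real.dist_eq, dist_eq_norm, abs_sub_le_iff, Real.coe_toNNReal R hRnn]
    constructor
    · have := hlip ξ η; linarith
    · have := hlip η ξ; rw [show ‖ξ - η‖ = ‖η - ξ‖ from norm_sub_rev _ _]; linarith
  have hsph_ne : (sphere (0 : EuclideanSpace ℝ (Fin n)) 1).Nonempty := by
    refine ⟨EuclideanSpace.single (⟨0, hn⟩ : Fin n) (1 : ℝ), ?_⟩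
    simp [EuclideanSpace.norm_single]
  obtain ⟨ξs, hξs_mem, hξs_max⟩ :=
    (isCompact_sphere (0 : EuclideanSpace ℝ (Fin n)) 1).exists_isMaxOn hsph_ne
      hφcont.continuousOn
  have hξs_norm : ‖ξs‖ = 1 := by simpa [mem_sphere, dist_zero_right] using hξs_mem
  have hξs_ne : ξs ≠ 0 := by
    intro h; rw [h, norm_zero] at hξs_norm; norm_num at hξs_norm
  obtain ⟨y, hyΔ, hy⟩ := hneg ξs hξs_ne
  have hφs_neg : φ ξs < 0 := lt_of_le_of_lt (hle ξs y hyΔ) hy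
  refine ⟨-φ ξs, by linarith, ?_⟩
  intro ξ hξ
  obtain ⟨y', hy'Δ, hy'⟩ := hattain ξ
  refine ⟨y', hy'Δ, ?_⟩
  have : φ ξ ≤ φ ξs := hξs_max (by simpa [mem_sphere, dist_zero_right] using hξ)
  linarith [hy']

lemma properness {n : ℕ} (hn : 1 ≤ n) {Δ : Set (EuclideanSpace ℝ (Fin n))}
    (hΔcpt : IsCompact Δ) (hΔconv : Convex ℝ Δ) (hΔint : (interior Δ).Nonempty)
    {G : EuclideanSpace ℝ (Fin n) → ℝ} (hG : Continuous G)
    (hneg : ∀ ξ : EuclideanSpace ℝ (Fin n), ξ ≠ 0 → ∃ y ∈ Δ, ⟪y, ξ⟫ < 0) :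
    Filter.Tendsto
        (fun ξ : EuclideanSpace ℝ (Fin n) =>
          Real.log (∫ y in Δ, Real.exp (-G y - ⟪y, ξ⟫)))
        (Bornology.cobounded (EuclideanSpace ℝ (Fin n))) Filter.atTop := by
  have hΔne : Δ.Nonempty := hΔint.mono interior_subset
  obtain ⟨c, hc, hunif⟩ := sphere_unif hn hΔcpt hΔne hneg
  obtain ⟨R, hR⟩ := hΔcpt.isBounded.subset_closedBall 0
  have hRnn : 0 ≤ R := by
    obtain ⟨y, hy⟩ := hΔne
    have := hR hy
    simp only [mem_closedBall, dist_zero_right] at this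
    exact le_trans (norm_nonneg _) this
  obtain ⟨x₀, hx₀⟩ := hΔint
  obtain ⟨ρ, hρ, hball⟩ := Metric.isOpen_iff.mp isOpen_interior x₀ hx₀
  have hballΔ : ball x₀ ρ ⊆ Δ := hball.trans interior_subset
  obtain ⟨MG, hMG⟩ := hΔcpt.exists_bound_of_continuousOn hG.continuousOn
  set t : ℝ := c / (2 * (c + R)) with ht_def
  have htpos : 0 < t := by positivity
  have htc : t * (c + R) = c / 2 := by
    rw [ht_def, div_mul_eq_mul_div, div_eq_div_iff (by positivity) (by norm_num)]; ring
  have ht1 : t ≤ 1 := by rw [ht_def, div_le_one (by positivity)]; linarith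
  set ε : ℝ := min (t * ρ / 2) (c / 4) with hε_def
  have hεpos : 0 < ε := lt_min (by positivity) (by positivity)
  set v : ℝ := (volume (closedBall (0 : EuclideanSpace ℝ (Fin n)) ε)).toReal with hv_def
  have hvpos : 0 < v :=
    ENNReal.toReal_pos (measure_closedBall_pos _ _ hεpos).ne' measure_closedBall_lt_top.ne
  -- the key pointwise estimate
  have key : ∀ ξ : EuclideanSpace ℝ (Fin n), ξ ≠ 0 →
      (-MG + c/4 * ‖ξ‖) + Real.log v
        ≤ Real.log (∫ y in Δ, Real.exp (-G y - ⟪y, ξ⟫)) := by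
    intro ξ hξ
    have hnξ : 0 < ‖ξ‖ := norm_pos_iff.mpr hξ
    set ξh : EuclideanSpace ℝ (Fin n) := ‖ξ‖⁻¹ • ξ with hξh_def
    have hξh_norm : ‖ξh‖ = 1 := by
      rw [hξh_def, norm_smul, norm_inv, norm_norm, inv_mul_cancel₀ hnξ.ne']
    obtain ⟨y₀, hy₀Δ, hy₀⟩ := hunif ξh hξh_norm
    set z : EuclideanSpace ℝ (Fin n) := y₀ + t • (x₀ - y₀) with hz_def
    -- the closed ball around z is inside Δ
    have hsubΔ : closedBall z ε ⊆ Δ := by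
      intro y hy
      rw [mem_closedBall, dist_eq_norm] at hy
      set w : EuclideanSpace ℝ (Fin n) := x₀ + t⁻¹ • (y - z) with hw_def
      have hwball : w ∈ ball x₀ ρ := by
        rw [mem_ball, dist_eq_norm, hw_def]
        have : ‖x₀ + t⁻¹ • (y - z) - x₀‖ = t⁻¹ * ‖y - z‖ := by
          rw [add_sub_cancel_left, norm_smul, norm_inv, Real.norm_eq_abs,
            abs_of_pos htpos]
        rw [this]
        have h1 : t⁻¹ * ‖y - z‖ ≤ t⁻¹ * ε := by
          apply mul_le_mul_of_nonneg_left hy (by positivity)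
        have h2 : ε < t * ρ := lt_of_le_of_lt (min_le_left _ _) (by nlinarith)
        calc t⁻¹ * ‖y - z‖ ≤ t⁻¹ * ε := h1
          _ < t⁻¹ * (t * ρ) := by apply mul_lt_mul_of_pos_left h2 (by positivity)
          _ = ρ := by field_simp
      have hwΔ : w ∈ Δ := hballΔ hwball
      have hyeq : y = (1 - t) • y₀ + t • w := by
        rw [hw_def, hz_def]
        rw [smul_add, smul_smul, mul_inv_cancel₀ htpos.ne', one_smul]
        module
      rw [hyeq]
      exact hΔconv hy₀Δ hwΔ (by linarith) htpos.le (by ring)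
    -- inner product estimate on the closed ball
    have hinner : ∀ y ∈ closedBall z ε, ⟪y, ξ⟫ ≤ ‖ξ‖ * (-(c/4)) := by
      intro y hy
      rw [mem_closedBall, dist_eq_norm] at hy
      have hx₀R : ‖x₀‖ ≤ R := by
        have := hR (hballΔ (mem_ball_self hρ))
        simpa [mem_closedBall, dist_zero_right] using this
      have hx₀i : ⟪x₀, ξh⟫ ≤ R := by
        calc ⟪x₀, ξh⟫ ≤ ‖x₀‖ * ‖ξh‖ := real_inner_le_norm _ _
          _ = ‖x₀‖ := by rw [hξh_norm, mul_one]
          _ ≤ R := hx₀R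
      have hzi : ⟪z, ξh⟫ ≤ -(c/2) := by
        have : ⟪z, ξh⟫ = ⟪y₀, ξh⟫ + t * (⟪x₀, ξh⟫ - ⟪y₀, ξh⟫) := by
          rw [hz_def, inner_add_left, real_inner_smul_left, inner_sub_left]
        rw [this]
        nlinarith [hy₀, hx₀i, htpos, ht1, htc]
      have hdiff : ⟪y - z, ξh⟫ ≤ c/4 := by
        calc ⟪y - z, ξh⟫ ≤ ‖y - z‖ * ‖ξh‖ := real_inner_le_norm _ _
          _ = ‖y - z‖ := by rw [hξh_norm, mul_one]
          _ ≤ ε := hy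
          _ ≤ c/4 := min_le_right _ _
      have hyi : ⟪y, ξh⟫ ≤ -(c/4) := by
        have : ⟪y, ξh⟫ = ⟪z, ξh⟫ + ⟪y - z, ξh⟫ := by rw [inner_sub_left]; ring
        rw [this]; linarith
      have hξeq : ξ = ‖ξ‖ • ξh := by
        rw [hξh_def, smul_smul, mul_inv_cancel₀ hnξ.ne', one_smul]
      calc ⟪y, ξ⟫ = ‖ξ‖ * ⟪y, ξh⟫ := by
            conv_lhs => rw [hξeq]
            rw [real_inner_smul_right]
        _ ≤ ‖ξ‖ * (-(c/4)) := mul_le_mul_of_nonneg_left hyi hnξ.le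
    -- integral estimate
    have hint : IntegrableOn (fun y => Real.exp (-G y - ⟪y, ξ⟫)) Δ :=
      ((hG.neg.sub (continuous_id.inner continuous_const)).rexp).continuousOn.integrableOn_compact hΔcpt
    have h1 : Real.exp (-MG + c/4 * ‖ξ‖) * (volume (closedBall z ε)).toReal
        ≤ ∫ y in closedBall z ε, Real.exp (-G y - ⟪y, ξ⟫) := by
      apply setIntegral_ge_of_const_le_real measurableSet_closedBall
        measure_closedBall_lt_top.ne
      · intro y hy
        apply Real.exp_le_exp.mpr
        have hyΔ : y ∈ Δ := hsubΔ hy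
        have hGy : G y ≤ MG := le_trans (le_abs_self _) (hMG y hyΔ)
        have := hinner y hy
        nlinarith
      · exact hint.mono_set hsubΔ
    have h2 : ∫ y in closedBall z ε, Real.exp (-G y - ⟪y, ξ⟫)
        ≤ ∫ y in Δ, Real.exp (-G y - ⟪y, ξ⟫) := by
      apply setIntegral_mono_set hint
        (Filter.Eventually.of_forall fun y => (Real.exp_pos _).le)
        (HasSubset.Subset.eventuallyLE hsubΔ)
    have hvol : (volume (closedBall z ε)).toReal = v := by
      rw [hv_def, Measure.addHaar_closedBall_center]
    have hconst_pos : 0 < Real.exp (-MG + c/4 * ‖ξ‖) * v := by positivity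
    have hle : Real.exp (-MG + c/4 * ‖ξ‖) * v ≤ ∫ y in Δ, Real.exp (-G y - ⟪y, ξ⟫) := by
      rw [← hvol]; exact le_trans h1 h2
    calc (-MG + c/4 * ‖ξ‖) + Real.log v
        = Real.log (Real.exp (-MG + c/4 * ‖ξ‖) * v) := by
          rw [Real.log_mul (Real.exp_pos _).ne' hvpos.ne', Real.log_exp]
      _ ≤ Real.log (∫ y in Δ, Real.exp (-G y - ⟪y, ξ⟫)) :=
          Real.log_le_log hconst_pos hle
  -- conclude
  have htend : Filter.Tendsto
      (fun ξ : EuclideanSpace ℝ (Fin n) => (-MG + c/4 * ‖ξ‖) + Real.log v)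
      (Bornology.cobounded (EuclideanSpace ℝ (Fin n))) Filter.atTop := by
    apply Filter.tendsto_atTop_add_const_right
    apply Filter.tendsto_atTop_add_const_left
    exact tendsto_norm_cobounded_atTop.const_mul_atTop (by positivity)
  apply Filter.tendsto_atTop_mono' _ _ htend
  filter_upwards [tendsto_norm_cobounded_atTop.eventually_ge_atTop 1] with ξ hξ
  have hξne : ξ ≠ 0 := by
    intro h; rw [h, norm_zero] at hξ; norm_num at hξ
  exact key ξ hξne

/-- For `Δ ⊂ ℝ^r` compact convex with nonempty interior, `G` continuous, and assuming for every
`ξ ≠ 0` the minimum of `⟨y, ξ⟩` over `Δ` is negative, the function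
`f(ξ) = log ∫_Δ exp(−G(y) − ⟨y, ξ⟩) dy` is proper (tends to `+∞` as `‖ξ‖ → ∞`) and attains
its infimum at a unique point. -/
theorem log_integral_exp_proper_unique_min
    (r : ℕ) (hr : 1 ≤ r)
    (Δ : Set (EuclideanSpace ℝ (Fin r)))
    (hΔcpt : IsCompact Δ) (hΔconv : Convex ℝ Δ) (hΔint : (interior Δ).Nonempty)
    (G : EuclideanSpace ℝ (Fin r) → ℝ) (hG : Continuous G)
    (hneg : ∀ ξ : EuclideanSpace ℝ (Fin r), ξ ≠ 0 → ∃ y ∈ Δ, ⟪y, ξ⟫ < 0) :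
    Filter.Tendsto
        (fun ξ : EuclideanSpace ℝ (Fin r) =>
          Real.log (∫ y in Δ, Real.exp (-G y - ⟪y, ξ⟫)))
        (Bornology.cobounded (EuclideanSpace ℝ (Fin r))) Filter.atTop ∧
      ∃! ξ₀ : EuclideanSpace ℝ (Fin r),
        ∀ ξ : EuclideanSpace ℝ (Fin r),
          Real.log (∫ y in Δ, Real.exp (-G y - ⟪y, ξ₀⟫)) ≤
            Real.log (∫ y in Δ, Real.exp (-G y - ⟪y, ξ⟫)) := by
  have hΔvol : 0 < volume Δ := by
    obtain ⟨x₀, hx₀⟩ := hΔint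
    obtain ⟨ρ, hρ, hball⟩ := Metric.isOpen_iff.mp isOpen_interior x₀ hx₀
    calc (0:ENNReal) < volume (ball x₀ ρ) := measure_ball_pos _ _ hρ
      _ ≤ volume Δ := measure_mono (hball.trans interior_subset)
  set h : EuclideanSpace ℝ (Fin r) → ℝ :=
    fun ξ => ∫ y in Δ, Real.exp (-G y - ⟪y, ξ⟫) with hh_def
  have hpos : ∀ ξ, 0 < h ξ := fun ξ =>
    integral_exp_pos' hΔcpt hΔvol (hG.neg.sub (continuous_id.inner continuous_const))
  set f : EuclideanSpace ℝ (Fin r) → ℝ := fun ξ => Real.log (h ξ) with hf_def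
  have hproper : Filter.Tendsto f (Bornology.cobounded (EuclideanSpace ℝ (Fin r)))
      Filter.atTop := properness hr hΔcpt hΔconv hΔint hG hneg
  refine ⟨hproper, ?_⟩
  -- continuity
  have hhcont : Continuous h := by
    apply continuous_parametric_integral_of_continuous _ hΔcpt
    have : Continuous fun p : (EuclideanSpace ℝ (Fin r)) × (EuclideanSpace ℝ (Fin r)) =>
        Real.exp (-G p.2 - ⟪p.2, p.1⟫) :=
      (((hG.comp continuous_snd).neg).sub (continuous_snd.inner continuous_fst)).rexp
    exact this
  have hfcont : Continuous f := by
    rw [continuous_iff_continuousAt]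
    intro ξ
    exact (Real.continuousAt_log (hpos ξ).ne').comp hhcont.continuousAt
  -- existence of a global minimizer
  have hev : ∀ᶠ ξ in Bornology.cobounded (EuclideanSpace ℝ (Fin r)), f 0 ≤ f ξ :=
    hproper.eventually_ge_atTop (f 0)
  have hbdd : IsBounded {ξ : EuclideanSpace ℝ (Fin r) | f ξ < f 0} := by
    have : {ξ : EuclideanSpace ℝ (Fin r) | f 0 ≤ f ξ} ∈
        Bornology.cobounded (EuclideanSpace ℝ (Fin r)) := hev
    have h2 : IsCobounded {ξ : EuclideanSpace ℝ (Fin r) | f 0 ≤ f ξ} := this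
    have h3 := h2.compl
    simpa [Set.compl_setOf, not_le] using h3
  obtain ⟨R, hR⟩ := hbdd.subset_closedBall 0
  set R' : ℝ := max R 0 + 1 with hR'_def
  have hR'pos : 0 < R' := by positivity
  have hKne : (closedBall (0 : EuclideanSpace ℝ (Fin r)) R').Nonempty :=
    ⟨0, mem_closedBall_self hR'pos.le⟩
  obtain ⟨ξ₀, hξ₀mem, hξ₀min⟩ :=
    (isCompact_closedBall (0 : EuclideanSpace ℝ (Fin r)) R').exists_isMinOn hKne
      hfcont.continuousOn
  have hglobal : ∀ ξ, f ξ₀ ≤ f ξ := by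
    intro ξ
    by_cases hmem : ξ ∈ closedBall (0 : EuclideanSpace ℝ (Fin r)) R'
    · exact hξ₀min hmem
    · have h0 : f ξ₀ ≤ f 0 := hξ₀min (mem_closedBall_self hR'pos.le)
      have : ξ ∉ {ξ : EuclideanSpace ℝ (Fin r) | f ξ < f 0} := by
        intro hcon
        apply hmem
        have := hR hcon
        simp only [mem_closedBall, dist_zero_right] at this ⊢
        calc ‖ξ‖ ≤ R := this
          _ ≤ R' := by rw [hR'_def]; have := le_max_left R 0; linarith
      simp only [Set.mem_setOf_eq, not_lt] at this
      linarith
  refine ⟨ξ₀, hglobal, ?_⟩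
  -- uniqueness
  intro ξ₁ hξ₁
  by_contra hne
  have hmin0 : f ξ₀ ≤ f ξ₁ := hglobal ξ₁
  have hmin1 : f ξ₁ ≤ f ξ₀ := hξ₁ ξ₀
  have hfeq : f ξ₀ = f ξ₁ := le_antisymm hmin0 hmin1
  have hheq : h ξ₀ = h ξ₁ := by
    have := congrArg Real.exp hfeq
    rwa [hf_def, Real.exp_log (hpos ξ₀), Real.exp_log (hpos ξ₁)] at this
  have hlt := strict_midpoint hΔcpt hΔvol hG (hne : ξ₁ ≠ ξ₀)
  set m : EuclideanSpace ℝ (Fin r) := (2⁻¹:ℝ) • (ξ₁ + ξ₀) with hm_def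
  have hm1 : h m < h ξ₁ := by
    have h2 : h m ^ 2 < h ξ₁ * h ξ₀ := hlt
    rw [← hheq] at h2
    nlinarith [hpos m, hpos ξ₀]
  have : f ξ₁ ≤ f m := hξ₁ m
  rw [hf_def] at this
  have := Real.log_lt_log (hpos m) hm1
  linarith
end

section
/- Let n ≥ 1 be an integer and T > 0. Let g : [0, ∞) → [0, 1] be nonincreasing with g(0) = 1, concave on [0, T], and g(x) = 0 for x > T. Let A > 0 and suppose there exists ε ∈ (0, A) with g(ε) < 1. Then for every a > 0 one has 1 − a ∫₀^∞ g(x)^n e^{−a x} dx ≥ e^{−a T} > 0, and the function f(a) = a·A + log ( 1 − a ∫₀^∞ g(x)^n e^{−a x} dx ) tends to +∞ as a → +∞; more precisely there exists a constant B such that f(a) ≥ (A − ε) a − log a − B for all a ≥ 1. -/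
open MeasureTheory

private lemma exp_neg_mul_integral_Ioi {a : ℝ} (ha : 0 < a) (c : ℝ) :
    ∫ x in Set.Ioi c, Real.exp (-a * x) = Real.exp (-a * c) / a := by
  have h := integral_comp_mul_left_Ioi (fun y => Real.exp (-y)) c ha
  simp only [smul_eq_mul] at h
  have h2 : (fun x : ℝ => Real.exp (-a * x)) = fun x : ℝ => Real.exp (-(a * x)) := by
    funext x; rw [neg_mul]
  rw [h2]
  rw [h, integral_exp_neg_Ioi, neg_mul]
  ring

/-- Properness of the rescaled `β̃`-functional along a ray: if `g : [0,∞) → [0,1]` is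
nonincreasing with `g(0)=1`, concave on `[0,T]` and vanishing beyond `T`, and `0 < ε < A` with
`g(ε) < 1`, then for every `a > 0` one has `1 − a∫₀^∞ g^n e^{−ax} dx ≥ e^{−aT} > 0`, the
function `f(a) = aA + log(1 − a∫₀^∞ g^n e^{−ax} dx)` tends to `+∞` as `a → +∞`, and indeed
`f(a) ≥ (A−ε)a − log a − B` for all `a ≥ 1` and some constant `B`. -/
theorem tilde_beta_ray_proper
    (n : ℕ) (hn : 1 ≤ n) (T : ℝ) (hT : 0 < T)
    (g : ℝ → ℝ)
    (hg01 : ∀ x : ℝ, 0 ≤ x → g x ∈ Set.Icc (0:ℝ) 1)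
    (hmono : AntitoneOn g (Set.Ici 0))
    (hg0 : g 0 = 1)
    (hconc : ConcaveOn ℝ (Set.Icc 0 T) g)
    (hgT : ∀ x : ℝ, T < x → g x = 0)
    (A : ℝ) (hA : 0 < A)
    (ε : ℝ) (hε0 : 0 < ε) (hεA : ε < A) (hgε : g ε < 1) :
    (∀ a : ℝ, 0 < a →
        Real.exp (-a * T) ≤ 1 - a * ∫ x in Set.Ioi (0:ℝ), g x ^ n * Real.exp (-a * x) ∧
        0 < 1 - a * ∫ x in Set.Ioi (0:ℝ), g x ^ n * Real.exp (-a * x)) ∧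
    Filter.Tendsto
      (fun a : ℝ =>
        a * A + Real.log (1 - a * ∫ x in Set.Ioi (0:ℝ), g x ^ n * Real.exp (-a * x)))
      Filter.atTop Filter.atTop ∧
    ∃ B : ℝ, ∀ a : ℝ, 1 ≤ a →
      (A - ε) * a - Real.log a - B ≤
        a * A + Real.log (1 - a * ∫ x in Set.Ioi (0:ℝ), g x ^ n * Real.exp (-a * x)) := by
  have hgε0 : (0:ℝ) ≤ g ε := (hg01 ε hε0.le).1
  set c : ℝ := 1 - g ε with hc
  have hcpos : 0 < c := by simp only [hc]; linarith
  have hc1 : c ≤ 1 := by simp only [hc]; linarith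
  -- a.e.-measurability of g on Ioi 0
  have hgaem : AEMeasurable g (volume.restrict (Set.Ioi (0:ℝ))) :=
    aemeasurable_restrict_of_antitoneOn measurableSet_Ioi
      (hmono.mono Set.Ioi_subset_Ici_self)
  -- Basic integrability facts, for a > 0
  have hEint : ∀ (a b : ℝ), 0 < a →
      IntegrableOn (fun x : ℝ => Real.exp (-a * x)) (Set.Ioi b) :=
    fun a b ha => exp_neg_integrableOn_Ioi b ha
  have hfmeas : ∀ a : ℝ,
      AEStronglyMeasurable (fun x => g x ^ n * Real.exp (-a * x))
        (volume.restrict (Set.Ioi (0:ℝ))) := by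
    intro a
    exact ((hgaem.pow_const n).mul
      ((Real.measurable_exp.comp (measurable_id.const_mul (-a))).aemeasurable)
      ).aestronglyMeasurable
  have hfint : ∀ a : ℝ, 0 < a →
      IntegrableOn (fun x => g x ^ n * Real.exp (-a * x)) (Set.Ioi (0:ℝ)) := by
    intro a ha
    apply Integrable.mono' (hEint a 0 ha) (hfmeas a)
    filter_upwards [ae_restrict_mem measurableSet_Ioi] with x hx
    have h1 := hg01 x (le_of_lt hx)
    have hnn : 0 ≤ g x ^ n * Real.exp (-a * x) :=
      mul_nonneg (pow_nonneg h1.1 n) (Real.exp_pos _).le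
    rw [Real.norm_eq_abs, abs_of_nonneg hnn]
    calc g x ^ n * Real.exp (-a * x)
        ≤ 1 * Real.exp (-a * x) :=
          mul_le_mul_of_nonneg_right (pow_le_one₀ h1.1 h1.2) (Real.exp_pos _).le
      _ = Real.exp (-a * x) := one_mul _
  -- the key lower bounds on 1 - a*I
  have key : ∀ a : ℝ, 0 < a →
      Real.exp (-a * T) ≤ 1 - a * ∫ x in Set.Ioi (0:ℝ), g x ^ n * Real.exp (-a * x) ∧
      c * Real.exp (-a * ε) ≤
        1 - a * ∫ x in Set.Ioi (0:ℝ), g x ^ n * Real.exp (-a * x) := by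
    intro a ha
    have hE0 : ∫ x in Set.Ioi (0:ℝ), Real.exp (-a * x) = 1 / a := by
      rw [exp_neg_mul_integral_Ioi ha 0, mul_zero, Real.exp_zero]
    constructor
    · -- upper bound on the integral via the indicator of Ioc 0 T
      have hindint : IntegrableOn
          (fun x => Set.indicator (Set.Ioc (0:ℝ) T) (fun y => Real.exp (-a * y)) x)
          (Set.Ioi (0:ℝ)) := by
        rw [IntegrableOn, integrable_indicator_iff measurableSet_Ioc, IntegrableOn,
          Measure.restrict_restrict measurableSet_Ioc,
          Set.inter_eq_self_of_subset_left Set.Ioc_subset_Ioi_self]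
        exact (hEint a 0 ha).mono_set Set.Ioc_subset_Ioi_self
      have hle : ∫ x in Set.Ioi (0:ℝ), g x ^ n * Real.exp (-a * x) ≤
          ∫ x in Set.Ioi (0:ℝ),
            Set.indicator (Set.Ioc (0:ℝ) T) (fun y => Real.exp (-a * y)) x := by
        apply setIntegral_mono_on (hfint a ha) hindint measurableSet_Ioi
        intro x hx
        rcases le_or_gt x T with hxT | hxT
        · rw [Set.indicator_of_mem (Set.mem_Ioc.mpr ⟨Set.mem_Ioi.mp hx, hxT⟩)]
          have h1 := hg01 x (le_of_lt hx)
          calc g x ^ n * Real.exp (-a * x)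
              ≤ 1 * Real.exp (-a * x) :=
                mul_le_mul_of_nonneg_right (pow_le_one₀ h1.1 h1.2) (Real.exp_pos _).le
            _ = _ := one_mul _
        · rw [hgT x hxT, zero_pow (by omega), zero_mul]
          exact Set.indicator_nonneg (fun y _ => (Real.exp_pos _).le) x
      have hind : ∫ x in Set.Ioi (0:ℝ),
          Set.indicator (Set.Ioc (0:ℝ) T) (fun y => Real.exp (-a * y)) x =
          ∫ x in Set.Ioc (0:ℝ) T, Real.exp (-a * x) := by
        rw [setIntegral_indicator measurableSet_Ioc,
          Set.inter_eq_self_of_subset_right Set.Ioc_subset_Ioi_self]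
      have hsplit := setIntegral_union (f := fun x => Real.exp (-a * x)) (μ := volume)
        (Set.Ioc_disjoint_Ioi le_rfl) measurableSet_Ioi
        ((hEint a 0 ha).mono_set Set.Ioc_subset_Ioi_self) (hEint a T ha)
      rw [Set.Ioc_union_Ioi_eq_Ioi hT.le] at hsplit
      have hET : ∫ x in Set.Ioi T, Real.exp (-a * x) = Real.exp (-a * T) / a :=
        exp_neg_mul_integral_Ioi ha T
      rw [hE0, hET] at hsplit
      have hIocval : ∫ x in Set.Ioc (0:ℝ) T, Real.exp (-a * x)
          = 1 / a - Real.exp (-a * T) / a := by linarith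
      have : ∫ x in Set.Ioi (0:ℝ), g x ^ n * Real.exp (-a * x)
          ≤ 1 / a - Real.exp (-a * T) / a := by
        rw [← hIocval]; linarith [hle, hind]
      have h2 : a * ∫ x in Set.Ioi (0:ℝ), g x ^ n * Real.exp (-a * x)
          ≤ a * (1 / a - Real.exp (-a * T) / a) :=
        mul_le_mul_of_nonneg_left this ha.le
      have h3 : a * (1 / a - Real.exp (-a * T) / a) = 1 - Real.exp (-a * T) := by
        field_simp
      linarith
    · -- lower bound: 1 - a I = a ∫ (E - f) ≥ a ∫_{Ioi ε} c E = c e^{-aε}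
      have hsubint : IntegrableOn
          (fun x => Real.exp (-a * x) - g x ^ n * Real.exp (-a * x)) (Set.Ioi (0:ℝ)) :=
        (hEint a 0 ha).sub (hfint a ha)
      have heq : 1 - a * ∫ x in Set.Ioi (0:ℝ), g x ^ n * Real.exp (-a * x)
          = a * ∫ x in Set.Ioi (0:ℝ),
              (Real.exp (-a * x) - g x ^ n * Real.exp (-a * x)) := by
        rw [integral_sub (hEint a 0 ha) (hfint a ha), hE0]
        field_simp
      have hnonneg : 0 ≤ᵐ[volume.restrict (Set.Ioi (0:ℝ))]
          fun x => Real.exp (-a * x) - g x ^ n * Real.exp (-a * x) := by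
        filter_upwards [ae_restrict_mem measurableSet_Ioi] with x hx
        have h1 := hg01 x (le_of_lt hx)
        have := pow_le_one₀ h1.1 h1.2 (n := n)
        simp only [Pi.zero_apply]
        nlinarith [Real.exp_pos (-a * x)]
      have hmono_set : ∫ x in Set.Ioi ε,
            (Real.exp (-a * x) - g x ^ n * Real.exp (-a * x))
          ≤ ∫ x in Set.Ioi (0:ℝ),
            (Real.exp (-a * x) - g x ^ n * Real.exp (-a * x)) :=
        setIntegral_mono_set hsubint hnonneg
          (HasSubset.Subset.eventuallyLE (Set.Ioi_subset_Ioi hε0.le))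
      have hlow : ∫ x in Set.Ioi ε, c * Real.exp (-a * x)
          ≤ ∫ x in Set.Ioi ε,
            (Real.exp (-a * x) - g x ^ n * Real.exp (-a * x)) := by
        apply setIntegral_mono_on ((hEint a ε ha).const_mul c)
          (hsubint.mono_set (Set.Ioi_subset_Ioi hε0.le)) measurableSet_Ioi
        intro x hx
        have hx0 : (0:ℝ) < x := lt_trans hε0 hx
        have h1 := hg01 x hx0.le
        have hgx : g x ≤ g ε := hmono hε0.le hx0.le (le_of_lt hx)
        have hpow : g x ^ n ≤ g x := pow_le_of_le_one h1.1 h1.2 (by omega)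
        have hE := Real.exp_pos (-a * x)
        nlinarith
      have hcE : ∫ x in Set.Ioi ε, c * Real.exp (-a * x)
          = c * (Real.exp (-a * ε) / a) := by
        rw [integral_const_mul, exp_neg_mul_integral_Ioi ha ε]
      rw [heq]
      have : c * (Real.exp (-a * ε) / a)
          ≤ ∫ x in Set.Ioi (0:ℝ),
            (Real.exp (-a * x) - g x ^ n * Real.exp (-a * x)) := by
        rw [← hcE]; linarith
      have h4 : a * (c * (Real.exp (-a * ε) / a)) = c * Real.exp (-a * ε) := by
        field_simp
      calc c * Real.exp (-a * ε) = a * (c * (Real.exp (-a * ε) / a)) := h4.symm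
        _ ≤ _ := mul_le_mul_of_nonneg_left this ha.le
  -- main lower bound on f
  have hflow : ∀ a : ℝ, 0 < a →
      (A - ε) * a + Real.log c ≤
        a * A + Real.log (1 - a * ∫ x in Set.Ioi (0:ℝ), g x ^ n * Real.exp (-a * x)) := by
    intro a ha
    have h1 := (key a ha).2
    have hpos : (0:ℝ) < c * Real.exp (-a * ε) :=
      mul_pos hcpos (Real.exp_pos _)
    have hlog : Real.log (c * Real.exp (-a * ε)) ≤
        Real.log (1 - a * ∫ x in Set.Ioi (0:ℝ), g x ^ n * Real.exp (-a * x)) :=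
      Real.log_le_log hpos h1
    rw [Real.log_mul hcpos.ne' (Real.exp_pos _).ne', Real.log_exp] at hlog
    nlinarith
  refine ⟨fun a ha => ⟨(key a ha).1,
      lt_of_lt_of_le (mul_pos hcpos (Real.exp_pos _)) (key a ha).2⟩, ?_, ?_⟩
  · -- tendsto atTop
    have hev : (fun a : ℝ => (A - ε) * a + Real.log c) ≤ᶠ[Filter.atTop]
        fun a : ℝ =>
          a * A + Real.log (1 - a * ∫ x in Set.Ioi (0:ℝ), g x ^ n * Real.exp (-a * x)) := by
      filter_upwards [Filter.eventually_ge_atTop (1:ℝ)] with a ha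
      exact hflow a (lt_of_lt_of_le one_pos ha)
    exact Filter.tendsto_atTop_mono' Filter.atTop hev
      (Filter.tendsto_atTop_add_const_right _ _
        (Filter.Tendsto.const_mul_atTop (by linarith) Filter.tendsto_id))
  · refine ⟨-Real.log c, fun a ha => ?_⟩
    have h1 := hflow a (lt_of_lt_of_le one_pos ha)
    have h2 : 0 ≤ Real.log a := Real.log_nonneg ha
    linarith
end
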